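/- Let (X,e,μ) be an NP_i-digital H-space (i ∈ {1,2}) with X NP_i-irreducible, and let x lie in X_e, the connected component of e. Then μ_x and ν_x are isomorphisms of digital images. -/

import Mathlib

/-!
Adjacent points `x ∼ x'` give a one-step homotopy `μ_x ≃ μ_x'`, so along a path from `x` to `e`
we get `μ_x ≃ μ_e ≃ id`, and likewise `ν_x ≃ id`. A self-map `f ≃ id` of an irreducible image
is an isomorphism: in the finite monoid of self-maps some iterate `r = f^N` is idempotent, and
still `r ≃ id`, so `X` is homotopy equivalent to the fixed-point set of `r`. Irreducibility forces
that set to be all of `X`, i.e. `f^N = id`, and `f^(N-1)` is a continuous inverse of `f`.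
-/

/-- A digital image: a finite set with a reflexive, symmetric adjacency relation
(a finite reflexive graph). -/
structure DigImage where
  carrier : Type
  [fintype : Fintype carrier]
  adj : carrier → carrier → Prop
  adj_refl : ∀ x, adj x x
  adj_symm : ∀ {x y}, adj x y → adj y x

attribute [instance] DigImage.fintype

/-- `f : (X,κ) → (Y,λ)` is digitally continuous if it preserves adjacency. -/
def DigContinuous (X Y : DigImage) (f : X.carrier → Y.carrier) : Prop :=
  ∀ ⦃a b : X.carrier⦄, X.adj a b → Y.adj (f a) (f b)

/-- The product of two digital images with the normal product adjacency `NP_i`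
(for `i ≤ 1` this is `NP_1`; otherwise `NP_2`): two pairs are adjacent iff
their coordinates are adjacent in at most `i` positions and equal elsewhere. -/
def DigImage.prod (i : ℕ) (X Y : DigImage) : DigImage where
  carrier := X.carrier × Y.carrier
  adj p q :=
    if i ≤ 1 then (p.1 = q.1 ∧ Y.adj p.2 q.2) ∨ (p.2 = q.2 ∧ X.adj p.1 q.1)
    else X.adj p.1 q.1 ∧ Y.adj p.2 q.2
  adj_refl p := by
    split_ifs
    · exact Or.inl ⟨rfl, Y.adj_refl p.2⟩
    · exact ⟨X.adj_refl p.1, Y.adj_refl p.2⟩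
  adj_symm {p q} h := by
    split_ifs at h ⊢ with hi
    · rcases h with ⟨h1, h2⟩ | ⟨h1, h2⟩
      · exact Or.inl ⟨h1.symm, Y.adj_symm h2⟩
      · exact Or.inr ⟨h1.symm, X.adj_symm h2⟩
    · exact ⟨X.adj_symm h.1, Y.adj_symm h.2⟩

/-- The triple product of digital images with the normal product adjacency `NP_i`:
coordinates adjacent in at most `i` positions and equal in all other positions. -/
def DigImage.prod3 (i : ℕ) (X Y Z : DigImage) : DigImage where
  carrier := X.carrier × Y.carrier × Z.carrier
  adj p q :=
    if i ≤ 1 then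
      (p.1 = q.1 ∧ p.2.1 = q.2.1 ∧ Z.adj p.2.2 q.2.2) ∨
      (p.1 = q.1 ∧ p.2.2 = q.2.2 ∧ Y.adj p.2.1 q.2.1) ∨
      (p.2.1 = q.2.1 ∧ p.2.2 = q.2.2 ∧ X.adj p.1 q.1)
    else
      (p.1 = q.1 ∧ Y.adj p.2.1 q.2.1 ∧ Z.adj p.2.2 q.2.2) ∨
      (p.2.1 = q.2.1 ∧ X.adj p.1 q.1 ∧ Z.adj p.2.2 q.2.2) ∨
      (p.2.2 = q.2.2 ∧ X.adj p.1 q.1 ∧ Y.adj p.2.1 q.2.1)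
  adj_refl p := by
    split_ifs
    · exact Or.inl ⟨rfl, rfl, Z.adj_refl p.2.2⟩
    · exact Or.inl ⟨rfl, Y.adj_refl p.2.1, Z.adj_refl p.2.2⟩
  adj_symm {p q} h := by
    split_ifs at h ⊢ with hi
    · rcases h with ⟨h1, h2, h3⟩ | ⟨h1, h2, h3⟩ | ⟨h1, h2, h3⟩
      · exact Or.inl ⟨h1.symm, h2.symm, Z.adj_symm h3⟩
      · exact Or.inr (Or.inl ⟨h1.symm, h2.symm, Y.adj_symm h3⟩)
      · exact Or.inr (Or.inr ⟨h1.symm, h2.symm, X.adj_symm h3⟩)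
    · rcases h with ⟨h1, h2, h3⟩ | ⟨h1, h2, h3⟩ | ⟨h1, h2, h3⟩
      · exact Or.inl ⟨h1.symm, Y.adj_symm h2, Z.adj_symm h3⟩
      · exact Or.inr (Or.inl ⟨h1.symm, X.adj_symm h2, Z.adj_symm h3⟩)
      · exact Or.inr (Or.inr ⟨h1.symm, X.adj_symm h2, Y.adj_symm h3⟩)

/-- The digital interval `[0,m]_ℤ` with the standard adjacency `|a−b| ≤ 1`. -/
def digInterval (m : ℕ) : DigImage where
  carrier := Fin (m + 1)
  adj a b := |(a : ℤ) - (b : ℤ)| ≤ 1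
  adj_refl a := by simp
  adj_symm {a b} h := by
    have h' : |(a : ℤ) - (b : ℤ)| ≤ 1 := h
    rw [abs_sub_comm] at h'
    exact h'

/-- `f` and `g` are `NP_i`-digitally homotopic: there is an
`NP_i`-continuous `H : X × [0,m]_ℤ → Y` with `H(·,0) = f` and `H(·,m) = g`. -/
def DigHomotopic (i : ℕ) (X Y : DigImage) (f g : X.carrier → Y.carrier) : Prop :=
  ∃ (m : ℕ) (H : X.carrier × Fin (m + 1) → Y.carrier),
    DigContinuous (DigImage.prod i X (digInterval m)) Y H ∧
    (∀ x, H (x, 0) = f x) ∧ (∀ x, H (x, Fin.last m) = g x)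

/-- An `NP_i`-digital H-space `(X,e,μ)`. -/
structure IsHSpace (i : ℕ) (X : DigImage) (e : X.carrier)
    (μ : X.carrier × X.carrier → X.carrier) : Prop where
  continuous : DigContinuous (DigImage.prod i X X) X μ
  right_unit : DigHomotopic i X X (fun x => μ (x, e)) id
  left_unit : DigHomotopic i X X (fun x => μ (e, x)) id

/-- H-equivalence of `NP_i`-digital H-spaces. -/
def HSpaceEquiv (i : ℕ) (X : DigImage) (eX : X.carrier)
    (μX : X.carrier × X.carrier → X.carrier)
    (Y : DigImage) (eY : Y.carrier)
    (μY : Y.carrier × Y.carrier → Y.carrier) : Prop :=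
  ∃ (f : X.carrier → Y.carrier) (g : Y.carrier → X.carrier),
    DigContinuous X Y f ∧ DigContinuous Y X g ∧ f eX = eY ∧ g eY = eX ∧
    DigHomotopic i Y Y (f ∘ g) id ∧ DigHomotopic i X X (g ∘ f) id ∧
    DigHomotopic i (DigImage.prod i X X) Y (fun p => f (μX p)) (fun p => μY (f p.1, f p.2)) ∧
    DigHomotopic i (DigImage.prod i Y Y) X (fun p => g (μY p)) (fun p => μX (g p.1, g p.2))

/-- `NP_i`-homotopy equivalence of digital images. -/
def DigHtpyEquiv (i : ℕ) (X Y : DigImage) : Prop :=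
  ∃ (f : X.carrier → Y.carrier) (g : Y.carrier → X.carrier),
    DigContinuous X Y f ∧ DigContinuous Y X g ∧
    DigHomotopic i X X (g ∘ f) id ∧ DigHomotopic i Y Y (f ∘ g) id

/-- A digital image is `NP_i`-irreducible if it is not `NP_i`-homotopy
equivalent to any digital image with fewer points. -/
def DigIrreducible (i : ℕ) (X : DigImage) : Prop :=
  ¬ ∃ Y : DigImage, Fintype.card Y.carrier < Fintype.card X.carrier ∧ DigHtpyEquiv i X Y

/-- A digital image is connected if any two points are joined by a path
of consecutively adjacent points. -/
def DigConnected (X : DigImage) : Prop :=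
  ∀ a b : X.carrier, Relation.ReflTransGen X.adj a b

/-- A digital image is `NP_i`-contractible if the identity is `NP_i`-homotopic
to a constant map. -/
def DigContractible (i : ℕ) (X : DigImage) : Prop :=
  ∃ c : X.carrier, DigHomotopic i X X id (fun _ => c)

/-- An isomorphism of digital images: a continuous bijection with continuous inverse. -/
def IsDigIso (X Y : DigImage) (f : X.carrier → Y.carrier) : Prop :=
  DigContinuous X Y f ∧ ∃ g : Y.carrier → X.carrier,
    DigContinuous Y X g ∧ Function.LeftInverse g f ∧ Function.RightInverse g f

/-- The sub-digital-image on the points satisfying `P`, with the induced adjacency. -/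
noncomputable def subImage (X : DigImage) (P : X.carrier → Prop) : DigImage where
  carrier := {x : X.carrier // P x}
  fintype := Fintype.ofFinite _
  adj a b := X.adj a.1 b.1
  adj_refl a := X.adj_refl a.1
  adj_symm h := X.adj_symm h

/-- The connected component of `e`, as a digital image. -/
noncomputable def componentImage (X : DigImage) (e : X.carrier) : DigImage :=
  subImage X (fun x => Relation.ReflTransGen X.adj e x)

/-- Homotopy-associativity of an `NP_i`-digital multiplication:
`μ∘(id × μ) ≃ᵢ μ∘(μ × id)` as maps `X × X × X → X` with `NP_i` adjacency. -/
def HomotopyAssociative (i : ℕ) (X : DigImage)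
    (μ : X.carrier × X.carrier → X.carrier) : Prop :=
  DigHomotopic i (DigImage.prod3 i X X X) X
    (fun p => μ (p.1, μ (p.2.1, p.2.2)))
    (fun p => μ (μ (p.1, p.2.1), p.2.2))

/-- `α` is a left homotopy-inverse for the H-space `(X,e,μ)`. -/
def LeftHtpyInverse (i : ℕ) (X : DigImage) (e : X.carrier)
    (μ : X.carrier × X.carrier → X.carrier) (α : X.carrier → X.carrier) : Prop :=
  DigContinuous X X α ∧ DigContinuous X X (fun x => μ (α x, x)) ∧
  DigHomotopic i X X (fun x => μ (α x, x)) (fun _ => e)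

/-- `β` is a right homotopy-inverse for the H-space `(X,e,μ)`. -/
def RightHtpyInverse (i : ℕ) (X : DigImage) (e : X.carrier)
    (μ : X.carrier × X.carrier → X.carrier) (β : X.carrier → X.carrier) : Prop :=
  DigContinuous X X β ∧ DigContinuous X X (fun x => μ (x, β x)) ∧
  DigHomotopic i X X (fun x => μ (x, β x)) (fun _ => e)

namespace DigImage

variable {i : ℕ} {X Y : DigImage}

theorem prod_adj_iff {p q : X.carrier × Y.carrier} :
    (prod i X Y).adj p q ↔
      X.adj p.1 q.1 ∧ Y.adj p.2 q.2 ∧ (i ≤ 1 → p.1 = q.1 ∨ p.2 = q.2) := by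
  show (if i ≤ 1 then _ else _) ↔ _
  split_ifs with hi
  · constructor
    · rintro (⟨h1, h2⟩ | ⟨h2, h1⟩)
      · exact ⟨h1 ▸ X.adj_refl _, h2, fun _ => .inl h1⟩
      · exact ⟨h1, h2 ▸ Y.adj_refl _, fun _ => .inr h2⟩
    · rintro ⟨h1, h2, h⟩
      exact (h hi).imp (⟨·, h2⟩) (⟨·, h1⟩)
  · simp [hi]

theorem digInterval_adj_iff {m : ℕ} {t s : Fin (m + 1)} :
    (digInterval m).adj t s ↔ (t : ℕ) ≤ s + 1 ∧ (s : ℕ) ≤ t + 1 := by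
  show |((t : ℕ) : ℤ) - ((s : ℕ) : ℤ)| ≤ 1 ↔ _
  rw [abs_le]
  omega

end DigImage

open DigImage

section Continuity

variable {i : ℕ} {X Y Z X' Y' : DigImage}

theorem digContinuous_id : DigContinuous X X id := fun _ _ h => h

theorem DigContinuous.comp {g : Y.carrier → Z.carrier} {f : X.carrier → Y.carrier}
    (hg : DigContinuous Y Z g) (hf : DigContinuous X Y f) : DigContinuous X Z (g ∘ f) :=
  fun _ _ h => hg (hf h)

theorem DigContinuous.iterate {f : X.carrier → X.carrier} (hf : DigContinuous X X f) :
    ∀ n, DigContinuous X X f^[n]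
  | 0 => digContinuous_id
  | n + 1 => (hf.iterate n).comp hf

theorem digContinuous_fst : DigContinuous (prod i X Y) X Prod.fst :=
  fun _ _ h => (prod_adj_iff.1 h).1

theorem digContinuous_prodMk_left (x : X.carrier) :
    DigContinuous Y (prod i X Y) (fun y => (x, y)) :=
  fun _ _ h => prod_adj_iff.2 ⟨X.adj_refl x, h, fun _ => .inl rfl⟩

theorem digContinuous_swap : DigContinuous (prod i X Y) (prod i Y X) Prod.swap := fun _ _ h =>
  let ⟨h1, h2, h3⟩ := prod_adj_iff.1 h
  prod_adj_iff.2 ⟨h2, h1, fun hi => (h3 hi).symm⟩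

theorem DigContinuous.prodMap {f : X.carrier → X'.carrier} {g : Y.carrier → Y'.carrier}
    (hf : DigContinuous X X' f) (hg : DigContinuous Y Y' g) :
    DigContinuous (prod i X Y) (prod i X' Y') (Prod.map f g) := fun _ _ h =>
  let ⟨h1, h2, h3⟩ := prod_adj_iff.1 h
  prod_adj_iff.2 ⟨hf h1, hg h2, fun hi => (h3 hi).imp (congrArg f) (congrArg g)⟩

end Continuity

namespace DigHomotopic

variable {i : ℕ} {X Y Z : DigImage}

protected theorem refl {f : X.carrier → Y.carrier} (hf : DigContinuous X Y f) :
    DigHomotopic i X Y f f :=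
  ⟨0, f ∘ Prod.fst, hf.comp digContinuous_fst, fun _ => rfl, fun _ => rfl⟩

theorem comp_left {f g : X.carrier → Y.carrier} (h : DigHomotopic i X Y f g)
    {k : Y.carrier → Z.carrier} (hk : DigContinuous Y Z k) :
    DigHomotopic i X Z (k ∘ f) (k ∘ g) :=
  let ⟨m, H, hH, hH0, hH1⟩ := h
  ⟨m, k ∘ H, hk.comp hH, fun x => congrArg k (hH0 x), fun x => congrArg k (hH1 x)⟩

/-- Concatenation: on `[0, m + n]` run `H` on `[0, m]` and `K`, shifted by `m`, on `[m, m + n]`;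
the two descriptions agree at `m`, and adjacent times always lie in a common half. -/
protected theorem trans {f g h : X.carrier → Y.carrier}
    (hfg : DigHomotopic i X Y f g) (hgh : DigHomotopic i X Y g h) : DigHomotopic i X Y f h := by
  obtain ⟨m, H, hH, hH0, hH1⟩ := hfg
  obtain ⟨n, K, hK, hK0, hK1⟩ := hgh
  let lower : Fin (m + n + 1) → Fin (m + 1) := fun t => ⟨min t m, by omega⟩
  let upper : Fin (m + n + 1) → Fin (n + 1) := fun t => ⟨t - m, by omega⟩
  have hlower : DigContinuous (digInterval (m + n)) (digInterval m) lower := fun t s hts => by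
    have := digInterval_adj_iff.1 hts
    refine digInterval_adj_iff.2 ?_
    simp only [lower]
    omega
  have hupper : DigContinuous (digInterval (m + n)) (digInterval n) upper := fun t s hts => by
    have := digInterval_adj_iff.1 hts
    refine digInterval_adj_iff.2 ?_
    simp only [upper]
    omega
  let L : X.carrier × Fin (m + n + 1) → Y.carrier := fun p =>
    if (p.2 : ℕ) ≤ m then H (Prod.map id lower p) else K (Prod.map id upper p)
  have hL_lower : ∀ p : X.carrier × Fin (m + n + 1), (p.2 : ℕ) ≤ m →
      L p = H (Prod.map id lower p) := fun p hp => if_pos hp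
  have hL_upper : ∀ p : X.carrier × Fin (m + n + 1), m ≤ (p.2 : ℕ) →
      L p = K (Prod.map id upper p) := by
    rintro ⟨a, t⟩ hp
    by_cases ht : (t : ℕ) ≤ m
    · have hl : lower t = Fin.last m := Fin.ext (by simp [lower]; omega)
      have hu : upper t = 0 := Fin.ext (by simp [upper]; omega)
      simp only [L, if_pos ht, Prod.map, id, hl, hu, hH1, hK0]
    · exact if_neg ht
  refine ⟨m + n, L, ?_, fun a => ?_, fun a => ?_⟩
  · intro p q hpq
    have hts := digInterval_adj_iff.1 (prod_adj_iff.1 hpq).2.1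
    by_cases hpq_lower : Fin.val p.2 ≤ m ∧ Fin.val q.2 ≤ m
    · rw [hL_lower p hpq_lower.1, hL_lower q hpq_lower.2]
      exact hH (digContinuous_id.prodMap hlower hpq)
    · rw [hL_upper p (by omega), hL_upper q (by omega)]
      exact hK (digContinuous_id.prodMap hupper hpq)
  · rw [hL_lower _ (Nat.zero_le m), ← hH0 a]
    rfl
  · rw [hL_upper _ (by simp), ← hK1 a]
    exact congrArg (fun t => K (a, t)) (Fin.ext (by simp [upper]))

theorem iterate_of_homotopic_id {f : X.carrier → X.carrier} (hf : DigContinuous X X f)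
    (h : DigHomotopic i X X f id) : ∀ n, DigHomotopic i X X f^[n] id
  | 0 => .refl digContinuous_id
  | n + 1 => by
    rw [Function.iterate_succ']
    exact ((iterate_of_homotopic_id hf h n).comp_left hf).trans h

end DigHomotopic

section Translations

variable {i : ℕ} {X Y Z : DigImage} {μ : X.carrier × Y.carrier → Z.carrier}

theorem digHomotopic_of_adj (hμ : DigContinuous (prod i X Y) Z μ) {x x' : X.carrier}
    (hx : X.adj x x') : DigHomotopic i Y Z (fun y => μ (x, y)) (fun y => μ (x', y)) := by
  let c : Fin 2 → X.carrier := fun t => if t = 0 then x else x'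
  have hc : DigContinuous (digInterval 1) X c := by
    intro t s _
    fin_cases t <;> fin_cases s <;> simp [c, hx, X.adj_symm hx, X.adj_refl]
  refine ⟨1, μ ∘ Prod.map c id ∘ Prod.swap,
    hμ.comp ((hc.prodMap digContinuous_id).comp digContinuous_swap), fun y => ?_, fun y => ?_⟩
  · simp [c]
  · simp [c, Fin.last]

theorem digHomotopic_of_reflTransGen (hμ : DigContinuous (prod i X Y) Z μ) {x x' : X.carrier}
    (hx : Relation.ReflTransGen X.adj x x') :
    DigHomotopic i Y Z (fun y => μ (x, y)) (fun y => μ (x', y)) := by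
  induction hx with
  | refl => exact .refl (hμ.comp (digContinuous_prodMk_left x))
  | tail _ hab ih => exact ih.trans (digHomotopic_of_adj hμ hab)

end Translations

theorem Function.exists_iterate_idempotent {α : Type*} [Finite α] (f : α → α) :
    ∃ N, 0 < N ∧ f^[N] ∘ f^[N] = f^[N] := by
  obtain ⟨a, b, hab, he⟩ := Finite.exists_ne_map_eq_of_infinite (fun n : ℕ => f^[n])
  wlog hlt : a < b generalizing a b
  · exact this b a hab.symm he.symm (by omega)
  have hstep : ∀ k, a ≤ k → f^[k + (b - a)] = f^[k] := fun k hk => by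
    rw [show k + (b - a) = (k - a) + b by omega, Function.iterate_add, ← he,
      ← Function.iterate_add, Nat.sub_add_cancel hk]
  have hperiodic : ∀ j k, a ≤ k → f^[k + j * (b - a)] = f^[k] := by
    intro j
    induction j with
    | zero => simp
    | succ j ih =>
      intro k hk
      rw [show k + (j + 1) * (b - a) = k + j * (b - a) + (b - a) by ring,
        hstep _ (by omega), ih k hk]
  have hN : a + 1 ≤ (a + 1) * (b - a) := Nat.le_mul_of_pos_right _ (by omega)
  refine ⟨(a + 1) * (b - a), by omega, ?_⟩
  rw [← Function.iterate_add]
  exact hperiodic _ _ (by omega)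

section Irreducible

variable {i : ℕ} {X : DigImage}

theorem digHtpyEquiv_subImage_fixed {r : X.carrier → X.carrier} (hr : DigContinuous X X r)
    (hidem : r ∘ r = r) (hrid : DigHomotopic i X X r id) :
    DigHtpyEquiv i X (subImage X (fun y => r y = y)) := by
  refine ⟨fun a => ⟨r a, congrFun hidem a⟩, Subtype.val, fun _ _ h => hr h, fun _ _ h => h,
    hrid, ?_⟩
  convert DigHomotopic.refl digContinuous_id
  exact funext fun y => Subtype.ext y.2

theorem DigIrreducible.eq_id_of_idempotent (hirr : DigIrreducible i X)
    {r : X.carrier → X.carrier} (hr : DigContinuous X X r) (hidem : r ∘ r = r)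
    (hrid : DigHomotopic i X X r id) : r = id := by
  by_contra hne
  obtain ⟨z, hz⟩ := Function.ne_iff.1 hne
  refine hirr ⟨_, ?_, digHtpyEquiv_subImage_fixed hr hidem hrid⟩
  refine Fintype.card_lt_of_injective_of_notMem Subtype.val Subtype.val_injective (b := z) ?_
  rintro ⟨⟨w, hw⟩, rfl⟩
  exact hz hw

theorem DigIrreducible.isDigIso_of_homotopic_id (hirr : DigIrreducible i X)
    {f : X.carrier → X.carrier} (hf : DigContinuous X X f) (hfid : DigHomotopic i X X f id) :
    IsDigIso X X f := by
  obtain ⟨N, hN, hidem⟩ := Function.exists_iterate_idempotent f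
  have hN_id : f^[N] = id :=
    hirr.eq_id_of_idempotent (hf.iterate N) hidem (hfid.iterate_of_homotopic_id hf N)
  obtain ⟨n, rfl⟩ := Nat.exists_eq_add_one_of_ne_zero hN.ne'
  refine ⟨hf, f^[n], hf.iterate n, fun a => ?_, fun a => ?_⟩
  · simpa only [Function.iterate_succ_apply, id_eq] using congrFun hN_id a
  · simpa only [Function.iterate_succ_apply', id_eq] using congrFun hN_id a

end Irreducible

theorem mu_nu_isomorphisms_general (i : ℕ)
    (X : DigImage) (e : X.carrier) (μ : X.carrier × X.carrier → X.carrier)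
    (h : IsHSpace i X e μ) (hirr : DigIrreducible i X)
    (x : X.carrier) (hx : Relation.ReflTransGen X.adj e x) :
    IsDigIso X X (fun a => μ (x, a)) ∧ IsDigIso X X (fun a => μ (a, x)) := by
  have : Std.Symm X.adj := ⟨fun _ _ => X.adj_symm⟩
  have hxe : Relation.ReflTransGen X.adj x e := Std.Symm.symm _ _ hx
  have hν : DigContinuous (prod i X X) X (fun p => μ (p.2, p.1)) :=
    h.continuous.comp digContinuous_swap
  exact ⟨hirr.isDigIso_of_homotopic_id (h.continuous.comp (digContinuous_prodMk_left x))
      ((digHomotopic_of_reflTransGen h.continuous hxe).trans h.left_unit),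
    hirr.isDigIso_of_homotopic_id (hν.comp (digContinuous_prodMk_left x))
      ((digHomotopic_of_reflTransGen hν hxe).trans h.right_unit)⟩

/-- In an `NP_i`-irreducible `NP_i`-digital H-space, for `x` in the
connected component of `e`, `μ_x` and `ν_x` are isomorphisms of digital images. -/
theorem mu_nu_isomorphisms (i : ℕ) (hi : i = 1 ∨ i = 2)
    (X : DigImage) (e : X.carrier) (μ : X.carrier × X.carrier → X.carrier)
    (h : IsHSpace i X e μ) (hirr : DigIrreducible i X)
    (x : X.carrier) (hx : Relation.ReflTransGen X.adj e x) :
    IsDigIso X X (fun a => μ (x, a)) ∧ IsDigIso X X (fun a => μ (a, x)) :=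
  mu_nu_isomorphisms_general i X e μ h hirr x hx
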